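/- arXiv:2306.06469 — 6 statements merged into one kernel-verified Lean document; each statement's English description precedes it below -/
import Mathlib

section
/- In the free group F on two generators T and B, the subgroup generated by {T·B, T·B⁻¹} equals the subgroup generated by {T·B, T·B²·T⁻¹}, and the two elements T·B and T·B²·T⁻¹ freely generate it; in particular this subgroup is free of rank 2. -/
set_option maxRecDepth 4000

lemma cons_toWord (x : Fin 2) (b : Bool) (w : FreeGroup (Fin 2))
    (h : w.toWord.head? ≠ some (x, !b)) :
    (FreeGroup.mk [(x, b)] * w).toWord = (x, b) :: w.toWord := by
  conv_lhs => rw [← FreeGroup.mk_toWord (x := w), FreeGroup.mul_mk]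
  rw [FreeGroup.toWord_mk, List.singleton_append, FreeGroup.reduce.cons, FreeGroup.reduce_toWord]
  rcases hw : w.toWord with _ | ⟨⟨y, c⟩, tl⟩
  · rfl
  · simp only
    rw [if_neg]
    rintro ⟨rfl, rfl⟩
    apply h
    rw [hw]
    simp

lemma head_toWord (x : Fin 2) (b : Bool) (w : FreeGroup (Fin 2))
    (h : w.toWord.head? ≠ some (x, !b)) :
    (FreeGroup.mk [(x, b)] * w).toWord.head? = some (x, b) := by
  rw [cons_toWord x b w h]; rfl

lemma of_eq_mk (x : Fin 2) : FreeGroup.of x = FreeGroup.mk [(x, true)] := rfl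

lemma inv_of_eq_mk (x : Fin 2) : (FreeGroup.of x)⁻¹ = FreeGroup.mk [(x, false)] := by
  rw [of_eq_mk, FreeGroup.inv_mk]; rfl

/-- the generating family `a ↦ T, b ↦ B²`. -/
def nfun : Fin 2 → FreeGroup (Fin 2) :=
  fun i => if i = 0 then FreeGroup.of 0 else FreeGroup.of 1 ^ 2

/-- injectivity of `a ↦ T, b ↦ B²` by ping-pong. -/
lemma N_injective : Function.Injective (FreeGroup.lift nfun) := by
  apply FreeGroup.injective_lift_of_ping_pong _
    (fun i => {w : FreeGroup (Fin 2) | w.toWord.head? = some (i, true)})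
    (fun i => {w : FreeGroup (Fin 2) | w.toWord.head? = some (i, false)})
  · intro i
    exact ⟨FreeGroup.of i, by simp [FreeGroup.toWord_of]⟩
  · intro i j hij
    rw [Function.onFun, Set.disjoint_left]
    rintro w (h1 : _ = _) (h2 : _ = _)
    rw [h1] at h2
    simp_all
  · intro i j hij
    rw [Function.onFun, Set.disjoint_left]
    rintro w (h1 : _ = _) (h2 : _ = _)
    rw [h1] at h2
    simp_all
  · intro i j
    rw [Set.disjoint_left]
    rintro w (h1 : _ = _) (h2 : _ = _)
    rw [h1] at h2
    simp_all
  · intro i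
    rintro z ⟨w, hw, rfl⟩
    simp only [Set.mem_compl_iff, Set.mem_setOf_eq] at hw
    fin_cases i
    · show (nfun 0 • w).toWord.head? = some (0, true)
      rw [show nfun 0 = FreeGroup.mk [(0, true)] from rfl, smul_eq_mul]
      exact head_toWord 0 true w (by simpa using hw)
    · show (nfun 1 • w).toWord.head? = some (1, true)
      rw [show nfun 1 = FreeGroup.of 1 ^ 2 from rfl, smul_eq_mul, pow_two, mul_assoc, of_eq_mk]
      refine head_toWord 1 true _ ?_
      rw [head_toWord 1 true w (by simpa using hw)]
      simp
  · intro i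
    rintro z ⟨w, hw, rfl⟩
    simp only [Set.mem_compl_iff, Set.mem_setOf_eq] at hw
    fin_cases i
    · show ((nfun 0)⁻¹ • w).toWord.head? = some (0, false)
      rw [show (nfun 0)⁻¹ = (FreeGroup.of 0)⁻¹ from rfl, smul_eq_mul, inv_of_eq_mk]
      exact head_toWord 0 false w (by simpa using hw)
    · show ((nfun 1)⁻¹ • w).toWord.head? = some (1, false)
      rw [show (nfun 1)⁻¹ = (FreeGroup.of 1 ^ 2)⁻¹ from rfl, smul_eq_mul, pow_two,
        mul_inv_rev, mul_assoc, inv_of_eq_mk]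
      refine head_toWord 1 false _ ?_
      rw [head_toWord 1 false w (by simpa using hw)]
      simp

def τfun : Fin 2 → FreeGroup (Fin 2) :=
  fun i => if i = 0 then FreeGroup.of 0 else FreeGroup.of 0 * FreeGroup.of 1 * (FreeGroup.of 0)⁻¹
def τ'fun : Fin 2 → FreeGroup (Fin 2) :=
  fun i => if i = 0 then FreeGroup.of 0 else (FreeGroup.of 0)⁻¹ * FreeGroup.of 1 * FreeGroup.of 0
def βfun : Fin 2 → FreeGroup (Fin 2) :=
  fun i => if i = 0 then FreeGroup.of 0 * FreeGroup.of 1 else FreeGroup.of 1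
def β'fun : Fin 2 → FreeGroup (Fin 2) :=
  fun i => if i = 0 then FreeGroup.of 0 * (FreeGroup.of 1)⁻¹ else FreeGroup.of 1

lemma tau_inv : (FreeGroup.lift τ'fun).comp (FreeGroup.lift τfun)
    = MonoidHom.id (FreeGroup (Fin 2)) := by
  ext i
  fin_cases i <;> simp [τfun, τ'fun, mul_assoc]

lemma beta_inv : (FreeGroup.lift β'fun).comp (FreeGroup.lift βfun)
    = MonoidHom.id (FreeGroup (Fin 2)) := by
  ext i
  fin_cases i <;> simp [βfun, β'fun, mul_assoc]

lemma tau_injective : Function.Injective (FreeGroup.lift τfun) := by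
  apply Function.LeftInverse.injective (g := FreeGroup.lift τ'fun)
  intro x
  calc (FreeGroup.lift τ'fun) ((FreeGroup.lift τfun) x)
      = ((FreeGroup.lift τ'fun).comp (FreeGroup.lift τfun)) x := rfl
    _ = x := by rw [tau_inv]; rfl

lemma beta_injective : Function.Injective (FreeGroup.lift βfun) := by
  apply Function.LeftInverse.injective (g := FreeGroup.lift β'fun)
  intro x
  calc (FreeGroup.lift β'fun) ((FreeGroup.lift βfun) x)
      = ((FreeGroup.lift β'fun).comp (FreeGroup.lift βfun)) x := rfl
    _ = x := by rw [beta_inv]; rfl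

def lfun : Fin 2 → FreeGroup (Fin 2) :=
  fun i => if i = 0 then FreeGroup.of 0 * FreeGroup.of 1
    else FreeGroup.of 0 * FreeGroup.of 1 ^ 2 * (FreeGroup.of 0)⁻¹

lemma decomp : FreeGroup.lift lfun =
    ((FreeGroup.lift βfun).comp (FreeGroup.lift nfun)).comp (FreeGroup.lift τfun) := by
  ext i
  fin_cases i <;> simp [lfun, βfun, nfun, τfun, pow_two, mul_assoc]

lemma L_injective : Function.Injective (FreeGroup.lift lfun) := by
  rw [decomp]
  simp only [MonoidHom.coe_comp]
  exact (beta_injective.comp N_injective).comp tau_injective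

/-- In the free group on two generators `T, B`, the subgroup generated by
`{T*B, T*B⁻¹}` equals the one generated by `{T*B, T*B^2*T⁻¹}`, and
`T*B` and `T*B^2*T⁻¹` freely generate it (the lift from the free group on two
letters is injective); in particular it is free of rank 2. -/
theorem stmt4 :
    let T : FreeGroup (Fin 2) := FreeGroup.of 0
    let B : FreeGroup (Fin 2) := FreeGroup.of 1
    Subgroup.closure {T * B, T * B⁻¹} =
        Subgroup.closure {T * B, T * B ^ 2 * T⁻¹} ∧
      Function.Injective
        (FreeGroup.lift (fun i : Fin 2 =>
          if i = 0 then T * B else T * B ^ 2 * T⁻¹)) := by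
  intro T B
  constructor
  · apply le_antisymm
    · rw [Subgroup.closure_le]
      rintro x (rfl | rfl)
      · exact Subgroup.subset_closure (Set.mem_insert _ _)
      · have h1 : T * B ∈ Subgroup.closure {T * B, T * B ^ 2 * T⁻¹} :=
          Subgroup.subset_closure (Set.mem_insert _ _)
        have h2 : T * B ^ 2 * T⁻¹ ∈ Subgroup.closure {T * B, T * B ^ 2 * T⁻¹} :=
          Subgroup.subset_closure (Set.mem_insert_of_mem _ rfl)
        have : T * B⁻¹ = (T * B ^ 2 * T⁻¹)⁻¹ * (T * B) := by rw [pow_two]; group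
        rw [this]
        exact mul_mem (inv_mem h2) h1
    · rw [Subgroup.closure_le]
      rintro x (rfl | rfl)
      · exact Subgroup.subset_closure (Set.mem_insert _ _)
      · have h1 : T * B ∈ Subgroup.closure {T * B, T * B⁻¹} :=
          Subgroup.subset_closure (Set.mem_insert _ _)
        have h2 : T * B⁻¹ ∈ Subgroup.closure {T * B, T * B⁻¹} :=
          Subgroup.subset_closure (Set.mem_insert_of_mem _ rfl)
        have : T * B ^ 2 * T⁻¹ = (T * B) * (T * B⁻¹)⁻¹ := by rw [pow_two]; group
        rw [this]
        exact mul_mem h1 (inv_mem h2)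
  · exact L_injective
end

section
/- Let G = ℤ * (ℤ × ℤ) be the free product of an infinite cyclic group generated by T with a free abelian group of rank two generated by commuting elements C and D. Then the subgroup of G generated by {T·C·T⁻¹, T·D, T·D⁻¹} is isomorphic to ℤ * (ℤ × ℤ); more precisely, with U = T·D, V = T·C·T⁻¹, W = T·D²·T⁻¹, one has ⟨T·C·T⁻¹, T·D, T·D⁻¹⟩ = ⟨U⟩ * ⟨V, W⟩ where V and W commute and ⟨V, W⟩ ≅ ℤ². -/
open Monoid

/-- `G = ℤ ∗ (ℤ × ℤ)`, with `T` the generator of the first factor and `C, D` the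
standard (commuting) generators of the second factor. -/
noncomputable abbrev STGroup5 :=
  Monoid.Coprod (Multiplicative ℤ) (Multiplicative ℤ × Multiplicative ℤ)

noncomputable def T5 : STGroup5 := Coprod.inl (Multiplicative.ofAdd 1)
noncomputable def C5 : STGroup5 := Coprod.inr (Multiplicative.ofAdd 1, 1)
noncomputable def D5 : STGroup5 := Coprod.inr (1, Multiplicative.ofAdd 1)

noncomputable def U5 : STGroup5 := T5 * D5
noncomputable def V5 : STGroup5 := T5 * C5 * T5⁻¹
noncomputable def W5 : STGroup5 := T5 * D5 ^ 2 * T5⁻¹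

/-!
The homomorphism `ℤ ∗ ℤ² → G` with `T ↦ U = TD`, `C ↦ V = TCT⁻¹`, `D ↦ W = TD²T⁻¹` is the
composite of three injective maps: the endomorphism fixing `T, C` with `D ↦ D²`, the automorphism
fixing `ℤ²` with `T ↦ DT`, and conjugation by `T`. The endomorphism is injective because a free
product of injective homomorphisms is injective: it sends reduced words to reduced words.
Its range is `⟨U, V, W⟩`, which equals `⟨TCT⁻¹, TD, TD⁻¹⟩` since `W = U (TD⁻¹)⁻¹`.
-/

open Function

namespace Monoid.CoprodI

variable {ι : Type*} {M N : ι → Type*} [∀ i, Monoid (M i)] [∀ i, Monoid (N i)]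

def map (f : ∀ i, M i →* N i) : CoprodI M →* CoprodI N := lift fun i => of.comp (f i)

@[simp] theorem map_of (f : ∀ i, M i →* N i) {i : ι} (m : M i) : map f (of m) = of (f i m) :=
  lift_of _ _

namespace Word

def map (f : ∀ i, M i →* N i) (hf : ∀ i, Injective (f i)) (w : Word M) : Word N where
  toList := w.toList.map (Sigma.map id fun i => f i)
  ne_one := by
    simp only [List.mem_map]
    rintro _ ⟨⟨i, m⟩, hm, rfl⟩
    exact (map_ne_one_iff (f i) (hf i)).2 (w.ne_one _ hm)
  chain_ne := (List.isChain_map _).2 w.chain_ne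

variable (f : ∀ i, M i →* N i) (hf : ∀ i, Injective (f i))

theorem prod_map (w : Word M) : (map f hf w).prod = CoprodI.map f w.prod := by
  simp only [prod, map, CoprodI.map, map_list_prod, List.map_map]
  rfl

theorem map_injective : Injective (map f hf) := fun _ _ h =>
  Word.ext <| (List.map_injective_iff.2 (injective_id.sigma_map hf)) (congrArg toList h)

end Word

theorem map_injective {f : ∀ i, M i →* N i} (hf : ∀ i, Injective (f i)) :
    Injective (map f) := by
  classical
  have h : map f = Word.prod ∘ Word.map f hf ∘ Word.equiv := by
    funext x
    simp only [comp_apply, Word.prod_map]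
    exact congrArg _ (Word.equiv.symm_apply_apply x).symm
  rw [h]
  exact (Word.equiv (M := N)).symm.injective.comp
    ((Word.map_injective f hf).comp Word.equiv.injective)

end Monoid.CoprodI

namespace Monoid.Coprod

section Bool

universe u v

variable {M N : Type u} [Monoid M] [Monoid N]

instance instMonoidCond : ∀ b : Bool, Monoid (cond b N M)
  | false => ‹Monoid M›
  | true => ‹Monoid N›

def toCoprodI : M ∗ N →* CoprodI (fun b => cond b N M) :=
  lift (CoprodI.of (M := fun b => cond b N M) (i := false))
    (CoprodI.of (M := fun b => cond b N M) (i := true))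

def ofCoprodI : CoprodI (fun b => cond b N M) →* M ∗ N :=
  CoprodI.lift fun
    | false => inl
    | true => inr

/-- `M ∗ N` is built directly rather than as a `CoprodI`, so its reduced words are only reached
through this isomorphism. -/
def equivCoprodI : M ∗ N ≃* CoprodI (fun b => cond b N M) :=
  MonoidHom.toMulEquiv toCoprodI ofCoprodI
    (hom_ext (by ext; simp [toCoprodI, ofCoprodI]) (by ext; simp [toCoprodI, ofCoprodI]))
    (CoprodI.ext_hom _ _ fun
      | false => by ext; simp [toCoprodI, ofCoprodI]
      | true => by ext; simp [toCoprodI, ofCoprodI])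

theorem map_injective {M' N' : Type v} [Monoid M'] [Monoid N'] {f : M →* M'} {g : N →* N'}
    (hf : Injective f) (hg : Injective g) : Injective (map f g) := by
  let φ : ∀ b : Bool, cond b N M →* cond b N' M'
    | false => f
    | true => g
  have hφ : ∀ b, Injective (φ b)
    | false => hf
    | true => hg
  have h : map f g = equivCoprodI.symm.toMonoidHom.comp
      ((CoprodI.map φ).comp equivCoprodI.toMonoidHom) :=
    hom_ext (by ext; simp [equivCoprodI, toCoprodI, ofCoprodI, φ])
      (by ext; simp [equivCoprodI, toCoprodI, ofCoprodI, φ])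
  rw [h]
  exact equivCoprodI.symm.injective.comp ((CoprodI.map_injective hφ).comp equivCoprodI.injective)

end Bool

variable {H : Type*} [Group H]

def slide (h : H) : Multiplicative ℤ ∗ H →* Multiplicative ℤ ∗ H :=
  lift (zpowersHom _ (inr h * inl (.ofAdd 1))) inr

theorem slide_injective (h : H) : Injective (slide h) := by
  have : (slide h⁻¹).comp (slide h) = .id _ :=
    hom_ext (MonoidHom.ext_mint (by simp [slide])) (by ext; simp [slide])
  exact LeftInverse.injective (DFunLike.congr_fun this)

end Monoid.Coprod

namespace MonoidHom

theorem prod_ext {M N P : Type*} [MulOneClass M] [MulOneClass N] [MulOneClass P]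
    {f g : M × N →* P} (hl : f.comp (inl M N) = g.comp (inl M N))
    (hr : f.comp (inr M N) = g.comp (inr M N)) : f = g := by
  ext p
  rw [← Prod.fst_mul_snd p, map_mul, map_mul]
  exact congr_arg₂ (· * ·) (DFunLike.congr_fun hl p.1) (DFunLike.congr_fun hr p.2)

theorem id_prodMap_powMonoidHom_injective {M N : Type*} [Monoid M] [CommMonoid N]
    [IsMulTorsionFree N] {n : ℕ} (hn : n ≠ 0) :
    Injective ((MonoidHom.id M).prodMap (powMonoidHom n : N →* N)) :=
  Prod.map_injective.2 ⟨injective_id, IsMulTorsionFree.pow_left_injective hn⟩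

end MonoidHom

open Coprod

theorem commute_V5_W5 : Commute V5 W5 := by
  have : Commute C5 (D5 ^ 2) := ((Commute.all _ _).map inr).pow_right 2
  exact this.map (MulAut.conj T5)

theorem lift_eq_conj_comp_slide_comp_map
    (hc : ∀ m n : Multiplicative ℤ,
      Commute (zpowersHom STGroup5 V5 m) (zpowersHom STGroup5 W5 n)) :
    lift (zpowersHom STGroup5 U5) (MonoidHom.noncommCoprod (zpowersHom STGroup5 V5)
        (zpowersHom STGroup5 W5) hc) =
      (MulAut.conj T5).toMonoidHom.comp ((slide (1, .ofAdd 1)).comp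
        (map (.id _) ((MonoidHom.id _).prodMap (powMonoidHom 2)))) := by
  refine hom_ext (MonoidHom.ext_mint ?_) ?_
  · simp [slide, U5, T5, D5, mul_assoc]
  · refine MonoidHom.prod_ext (MonoidHom.ext_mint ?_) (MonoidHom.ext_mint ?_)
    · simp [slide, V5, T5, C5]
    · simp [slide, W5, T5, D5, ← map_pow]

theorem zpowers_U5_sup_V5_sup_W5_eq_closure :
    Subgroup.zpowers U5 ⊔ (Subgroup.zpowers V5 ⊔ Subgroup.zpowers W5) =
      Subgroup.closure {T5 * C5 * T5⁻¹, T5 * D5, T5 * D5⁻¹} := by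
  have hW5 : W5 = (T5 * D5) * (T5 * D5⁻¹)⁻¹ := by simp only [W5, pow_two]; group
  have hTD : T5 * D5⁻¹ = W5⁻¹ * U5 := by simp only [W5, U5, pow_two]; group
  apply le_antisymm
  · refine sup_le (Subgroup.zpowers_le.2 ?_)
      (sup_le (Subgroup.zpowers_le.2 ?_) (Subgroup.zpowers_le.2 ?_))
    · exact Subgroup.subset_closure (by simp [U5])
    · exact Subgroup.subset_closure (by simp [V5])
    · rw [hW5]
      exact mul_mem (Subgroup.subset_closure (by simp))
        (inv_mem (Subgroup.subset_closure (by simp)))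
  · rw [Subgroup.closure_le, Set.insert_subset_iff, Set.insert_subset_iff,
      Set.singleton_subset_iff]
    refine ⟨?_, ?_, ?_⟩
    · exact Subgroup.mem_sup_right (Subgroup.mem_sup_left (Subgroup.mem_zpowers V5))
    · exact Subgroup.mem_sup_left (Subgroup.mem_zpowers U5)
    · rw [hTD]
      exact mul_mem
        (inv_mem (Subgroup.mem_sup_right (Subgroup.mem_sup_right (Subgroup.mem_zpowers W5))))
        (Subgroup.mem_sup_left (Subgroup.mem_zpowers U5))

/-- The subgroup of `ℤ ∗ (ℤ × ℤ)` generated by `{T C T⁻¹, T D, T D⁻¹}` is itself an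
(internal) free product `⟨U⟩ ∗ ⟨V, W⟩` with `U = T D`, `V = T C T⁻¹`, `W = T D² T⁻¹`,
where `V` and `W` commute and generate a copy of `ℤ²`; i.e. the natural map from
`ℤ ∗ (ℤ × ℤ)` sending the generators to `U` and `(V, W)` is injective with range
exactly `⟨T C T⁻¹, T D, T D⁻¹⟩`.  In particular this subgroup is isomorphic to
`ℤ ∗ (ℤ × ℤ)`. -/
theorem stmt5 :
    V5 * W5 = W5 * V5 ∧
    ∀ hc : ∀ m n : Multiplicative ℤ,
        Commute (zpowersHom STGroup5 V5 m) (zpowersHom STGroup5 W5 n),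
      Function.Injective
          (Coprod.lift (zpowersHom STGroup5 U5)
            (MonoidHom.noncommCoprod (zpowersHom STGroup5 V5)
              (zpowersHom STGroup5 W5) hc)) ∧
        (Coprod.lift (zpowersHom STGroup5 U5)
            (MonoidHom.noncommCoprod (zpowersHom STGroup5 V5)
              (zpowersHom STGroup5 W5) hc)).range =
          Subgroup.closure {T5 * C5 * T5⁻¹, T5 * D5, T5 * D5⁻¹} := by
  refine ⟨commute_V5_W5.eq, fun hc => ⟨?_, ?_⟩⟩
  · rw [lift_eq_conj_comp_slide_comp_map hc]
    exact (MulAut.conj T5).injective.comp ((slide_injective _).comp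
      (map_injective injective_id (MonoidHom.id_prodMap_powMonoidHom_injective two_ne_zero)))
  · rw [range_lift, MonoidHom.noncommCoprod_range]
    exact zpowers_U5_sup_V5_sup_W5_eq_closure
end

section
/- Let ~ be the equivalence relation on triples (α, β, γ) ∈ ℕ³ generated by the moves (A), (B), (C) below. Then for all α ≥ 0 and β ≥ 1 with α + β ≥ 2, (α, β, 0) ~ (0, 2, 0). -/
/-!
Starting from `(0, 2, 0)`, moves (B) of index 2 reach every `(2^k - 1, 2, 0)`. Given `(a + 1, β, 0)`,
choose `k` with `a + β ≤ 2^k β ≤ 2(a + β)`. Then a move (A) of index `2^(k+1)` applied to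
`(a + 1, β, 0)` and a move (B) of index `2(a + β)` applied to `(2^k - 1, 2, 0)` land on the same
signature `(2(a + β)(2^k - 1) + 1, 2(a + β), 0)`: the surplus `c = 2^k β - (a + β) ≤ a + β` is
absorbed by the choices `R = 2c` and `R = 1`. The case `α = 0` is a single move (B) from `(0, 2, 0)`.
-/

/-- One-step moves (A), (B), (C) on signatures `(α, β, γ) ∈ ℕ³`, encoding passage
to index-`n` subgroups of Schottky-type groups. -/
inductive STStep : ℕ × ℕ × ℕ → ℕ × ℕ × ℕ → Prop
  | A (n α β γ R S : ℕ) (hn : 1 ≤ n) (hα : 1 ≤ α)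
      (hR : R ≤ β * (n / 2)) (hS : S ≤ γ * (n / 2)) :
      STStep (α, β, γ) (1 + n * (α - 1) + R + S, n * β - R, n * γ - S)
  | B (n α β γ R S : ℕ) (hn : 1 ≤ n) (hβ : 1 ≤ β)
      (hR : R ≤ (β - 1) * (n / 2)) (hS : S ≤ γ * (n / 2)) :
      STStep (α, β, γ) (n * α + R + S, 1 + n * (β - 1) - R, n * γ - S)
  | C (n α β γ R S : ℕ) (hn : 1 ≤ n) (hγ : 1 ≤ γ)
      (hR : R ≤ β * (n / 2)) (hS : S ≤ (γ - 1) * (n / 2)) :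
      STStep (α, β, γ) (n * α + R + S, n * β - R, 1 + n * (γ - 1) - S)

/-- The equivalence relation on signatures generated by the moves (A), (B), (C). -/
def STEquiv : ℕ × ℕ × ℕ → ℕ × ℕ × ℕ → Prop := Relation.EqvGen STStep

theorem exists_pow_two_mul_mem_Icc {b m : ℕ} (hb : 0 < b) (hbm : b ≤ m) :
    ∃ k, m ≤ 2 ^ k * b ∧ 2 ^ k * b ≤ 2 * m := by
  refine ⟨Nat.log 2 (2 * m / b), ?_, ?_⟩
  · have hlt := (Nat.div_lt_iff_lt_mul hb).1 (Nat.lt_pow_succ_log_self one_lt_two (2 * m / b))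
    rw [pow_succ] at hlt
    nlinarith
  · have hpos : 0 < 2 * m / b := Nat.div_pos (by omega) hb
    exact (Nat.le_div_iff_mul_le hb).1 (Nat.pow_log_le_self 2 hpos.ne')

theorem STEquiv.of_steps_to {x y z : ℕ × ℕ × ℕ} (hx : STStep x z) (hy : STStep y z) :
    STEquiv x y :=
  .trans _ _ _ (.rel _ _ hx) (.symm _ _ (.rel _ _ hy))

theorem stStep_zero_two_zero {β : ℕ} (hβ : 2 ≤ β) : STStep (0, 2, 0) (0, β, 0) := by
  convert STStep.B (β - 1) 0 2 0 0 0 (by omega) one_le_two (Nat.zero_le _) (Nat.zero_le _) using 1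
  simp only [Prod.mk.injEq]
  omega

theorem stStep_two_mul_add_one (P : ℕ) : STStep (P, 2, 0) (2 * P + 1, 2, 0) :=
  STStep.B 2 P 2 0 1 0 one_le_two one_le_two le_rfl (Nat.zero_le _)

theorem stEquiv_zero_two_zero_pow_two_sub_one (k : ℕ) :
    STEquiv (0, 2, 0) (2 ^ k - 1, 2, 0) := by
  induction k with
  | zero => exact .refl _
  | succ k ih =>
    have hstep : 2 * (2 ^ k - 1) + 1 = 2 ^ (k + 1) - 1 := by
      have := Nat.one_le_two_pow (n := k)
      rw [pow_succ]
      omega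
    exact .trans _ _ _ ih (.rel _ _ (hstep ▸ stStep_two_mul_add_one _))

theorem stEquiv_succ_of_mul_mem_Icc {a b P : ℕ} (hb : 1 ≤ b) (hlo : a + b ≤ (P + 1) * b)
    (hhi : (P + 1) * b ≤ 2 * (a + b)) : STEquiv (a + 1, b, 0) (P, 2, 0) := by
  obtain ⟨c, hc⟩ := Nat.exists_eq_add_of_le hlo
  have hPb : P * b = a + c := by linarith
  apply STEquiv.of_steps_to (z := (2 * (a + b) * P + 1, 2 * (a + b), 0))
  · have hR : 2 * c ≤ b * (2 * (P + 1) / 2) := by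
      rw [Nat.mul_div_cancel_left _ two_pos]
      linarith
    convert STStep.A (2 * (P + 1)) (a + 1) b 0 (2 * c) 0 (by omega) (by omega) hR
      (Nat.zero_le _) using 1
    simp only [Prod.mk.injEq, Nat.add_sub_cancel, mul_zero, add_zero, Nat.sub_zero, and_true]
    refine ⟨by linear_combination 2 * hPb, by rw [mul_assoc, hc]; omega⟩
  · convert STStep.B (2 * (a + b)) P 2 0 1 0 (by omega) one_le_two
      (by rw [Nat.mul_div_cancel_left _ two_pos]; omega) (Nat.zero_le _) using 1
    simp only [Prod.mk.injEq]
    norm_num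

/-- Part (2) of the Main Theorem: every signature `(α, β, 0)` with `β ≥ 1` and
`α + β ≥ 2` is equivalent to `(0, 2, 0)`. -/
theorem stmt10 (α β : ℕ) (hβ : 1 ≤ β) (h : 2 ≤ α + β) :
    STEquiv (α, β, 0) (0, 2, 0) := by
  rcases α with _ | a
  · exact .symm _ _ (.rel _ _ (stStep_zero_two_zero (by omega)))
  · obtain ⟨k, hlo, hhi⟩ := exists_pow_two_mul_mem_Icc (m := a + β) hβ (by omega)
    have hpow : 2 ^ k - 1 + 1 = 2 ^ k := Nat.sub_add_cancel Nat.one_le_two_pow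
    have hmeet := stEquiv_succ_of_mul_mem_Icc (P := 2 ^ k - 1) hβ (hpow ▸ hlo) (hpow ▸ hhi)
    exact .trans _ _ _ hmeet (.symm _ _ (stEquiv_zero_two_zero_pow_two_sub_one k))
end

section
/- Let ~ be the equivalence relation on triples (α, β, γ) ∈ ℕ³ generated by the moves (A), (B), (C) below. Then for all α ≥ 0 and γ ≥ 1 with α + γ ≥ 2, (α, 0, γ) ~ (0, 0, 2). -/
/-- Specialized C-move with β = 0, R = 0, and the result given by equations. -/
lemma stepC0 (n x y S a c : ℕ) (hn : 1 ≤ n) (hy : 1 ≤ y)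
    (hS : S ≤ (y - 1) * (n / 2)) (ha : a = n * x + S)
    (hc : c + S = 1 + n * (y - 1)) : STStep (x, 0, y) (a, 0, c) := by
  have h := STStep.C n x 0 y 0 S hn hy (by simp) hS
  have e1 : n * x + 0 + S = a := by omega
  have e2 : n * 0 - 0 = 0 := by simp
  have e3 : 1 + n * (y - 1) - S = c := by omega
  rwa [e1, e2, e3] at h

/-- Specialized A-move with β = 0, R = 0. -/
lemma stepA0 (n x y S a c : ℕ) (hn : 1 ≤ n) (hx : 1 ≤ x)
    (hS : S ≤ y * (n / 2)) (ha : a = 1 + n * (x - 1) + S)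
    (hc : c + S = n * y) : STStep (x, 0, y) (a, 0, c) := by
  have h := STStep.A n x 0 y 0 S hn hx (by simp) hS
  have e1 : 1 + n * (x - 1) + 0 + S = a := by omega
  have e2 : n * 0 - 0 = 0 := by simp
  have e3 : n * y - S = c := by omega
  rwa [e1, e2, e3] at h

/-- `(1,0,1) ~ (0,0,2)`, via the common forward image `(1,0,3)`. -/
lemma base11 : STEquiv (1, 0, 1) (0, 0, 2) := by
  have h1 : STStep (1, 0, 1) (1, 0, 3) :=
    stepA0 3 1 1 0 1 3 (by norm_num) le_rfl (by norm_num) (by norm_num) (by norm_num)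
  have h2 : STStep (0, 0, 2) (1, 0, 3) :=
    stepC0 3 0 2 1 1 3 (by norm_num) (by norm_num) (by norm_num) (by norm_num) (by norm_num)
  exact (Relation.EqvGen.rel _ _ h1).trans _ _ _ ((Relation.EqvGen.rel _ _ h2).symm _ _)

/-- Main lemma, by strong induction on the first coordinate. -/
lemma key : ∀ a c : ℕ, 1 ≤ c → 2 ≤ a + c → STEquiv (a, 0, c) (0, 0, 2) := by
  intro a
  induction a using Nat.strong_induction_on with
  | _ a IH =>
    intro c hc h
    rcases lt_or_ge a c with hac | hac
    · -- a < c : one backward C-step from (0,0,2) with n = a+c-1, S = a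
      have hstep : STStep (0, 0, 2) (a, 0, c) := by
        refine stepC0 (a + c - 1) 0 2 a a c (by omega) (by norm_num) ?_ (by omega) (by omega)
        have : (2 - 1) * ((a + c - 1) / 2) = (a + c - 1) / 2 := by ring
        rw [this]; omega
      exact (Relation.EqvGen.rel _ _ hstep).symm _ _
    · -- a ≥ c
      rcases eq_or_lt_of_le hc with hc1 | hc2
      · obtain rfl : c = 1 := hc1.symm
        -- c = 1, a ≥ 1 : (a,0,1) is reached from (1,0,1) by C with n = a
        have hstep : STStep (1, 0, 1) (a, 0, 1) :=
          stepC0 a 1 1 0 a 1 (by omega) le_rfl (by omega) (by omega) (by omega)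
        exact ((Relation.EqvGen.rel _ _ hstep).symm _ _).trans _ _ _
          base11
      · -- c ≥ 2
        rcases Nat.even_or_odd (a + c) with hev | hodd
        · -- even: (a,0,c) → (2a,0,2c-1) ← (a-c+1,0,2c-1) ~ (0,0,2)
          have h1 : STStep (a, 0, c) (2 * a, 0, 2 * c - 1) :=
            stepC0 2 a c 0 (2 * a) (2 * c - 1) (by norm_num) hc (by norm_num)
              (by omega) (by omega)
          have h2 : STStep (a - c + 1, 0, 2 * c - 1) (2 * a, 0, 2 * c - 1) :=
            stepC0 2 (a - c + 1) (2 * c - 1) (2 * c - 2) (2 * a) (2 * c - 1) (by norm_num)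
              (by omega) (by omega) (by omega) (by omega)
          have h3 : STEquiv (a - c + 1, 0, 2 * c - 1) (0, 0, 2) :=
            IH (a - c + 1) (by omega) (2 * c - 1) (by omega) (by omega)
          exact (Relation.EqvGen.rel _ _ h1).trans _ _ _
            (((Relation.EqvGen.rel _ _ h2).symm _ _).trans _ _ _ h3)
        · -- odd: (a,0,c) ← ((a-c+1)/2, 0, c)
          have hpar : (a + c) % 2 = 1 := Nat.odd_iff.mp hodd
          have h1 : STStep ((a - c + 1) / 2, 0, c) (a, 0, c) :=
            stepC0 2 ((a - c + 1) / 2) c (c - 1) a c (by norm_num) hc (by omega)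
              (by omega) (by omega)
          have h3 : STEquiv ((a - c + 1) / 2, 0, c) (0, 0, 2) :=
            IH _ (by omega) c hc (by omega)
          exact ((Relation.EqvGen.rel _ _ h1).symm _ _).trans _ _ _ h3

/-- Part (3) of the Main Theorem: every signature `(α, 0, γ)` with `γ ≥ 1` and
`α + γ ≥ 2` is equivalent to `(0, 0, 2)`. -/
theorem stmt11 (α γ : ℕ) (hγ : 1 ≤ γ) (h : 2 ≤ α + γ) :
    STEquiv (α, 0, γ) (0, 0, 2) := key α γ hγ h
end

section
/- Let ~ be the equivalence relation on triples (α, β, γ) ∈ ℕ³ generated by the moves (A), (B), (C) below. Then for all α ≥ 0 and β, γ ≥ 1, (α, β, γ) ~ (0, 1, 1). -/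
/-- Move (A) with explicit target coordinates. -/
lemma stepA' (n α β γ R S x y z : ℕ) (hn : 1 ≤ n) (hα : 1 ≤ α)
    (hR : R ≤ β * (n / 2)) (hS : S ≤ γ * (n / 2))
    (hx : x = 1 + n * (α - 1) + R + S) (hy : y = n * β - R) (hz : z = n * γ - S) :
    STStep (α, β, γ) (x, y, z) := by
  subst hx hy hz; exact STStep.A n α β γ R S hn hα hR hS

/-- Move (B) with explicit target coordinates. -/
lemma stepB' (n α β γ R S x y z : ℕ) (hn : 1 ≤ n) (hβ : 1 ≤ β)
    (hR : R ≤ (β - 1) * (n / 2)) (hS : S ≤ γ * (n / 2))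
    (hx : x = n * α + R + S) (hy : y = 1 + n * (β - 1) - R) (hz : z = n * γ - S) :
    STStep (α, β, γ) (x, y, z) := by
  subst hx hy hz; exact STStep.B n α β γ R S hn hβ hR hS

/-- Two signatures with a common one-step image are equivalent. -/
lemma link (u v w : ℕ × ℕ × ℕ) (h1 : STStep u w) (h2 : STStep v w) : STEquiv u v :=
  Relation.EqvGen.trans _ _ _ (Relation.EqvGen.rel _ _ h1)
    (Relation.EqvGen.symm _ _ (Relation.EqvGen.rel _ _ h2))

/-- Hop lemma: two triples admitting matching n=2 move-(A) images are equivalent. -/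
lemma hop (α β γ a b c R S R' S' : ℕ) (hα : 1 ≤ α) (ha : 1 ≤ a)
    (hR : R ≤ β) (hS : S ≤ γ) (hR' : R' ≤ b) (hS' : S' ≤ c)
    (h1 : 2*α - 1 + R + S = 2*a - 1 + R' + S')
    (h2 : 2*β - R = 2*b - R') (h3 : 2*γ - S = 2*c - S') :
    STEquiv (α, β, γ) (a, b, c) := by
  apply link _ _ (2*α - 1 + R + S, 2*β - R, 2*γ - S)
  · exact stepA' 2 α β γ R S _ _ _ (by norm_num) hα (by omega) (by omega)
      (by omega) rfl rfl
  · exact stepA' 2 a b c R' S' _ _ _ (by norm_num) ha (by omega) (by omega)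
      (by omega) (by omega) (by omega)

/-- Any `(α,β,γ)` with `α ≥ 1` is equivalent to some `(1,b,c)`. -/
lemma reduce_alpha : ∀ α β γ : ℕ, 1 ≤ α → 1 ≤ β → 1 ≤ γ →
    ∃ b c, 1 ≤ b ∧ 1 ≤ c ∧ STEquiv (α, β, γ) (1, b, c) := by
  intro α
  induction α using Nat.strong_induction_on with
  | _ α ih =>
    intro β γ hα hβ hγ
    rcases eq_or_lt_of_le hα with h | h
    · exact ⟨β, γ, hβ, hγ, by rw [← h]; exact Relation.EqvGen.refl _⟩
    · -- α ≥ 2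
      set k := min (β + γ) (α - 1) with hk
      set p := min k β with hp
      set q := k - p with hq
      have hk1 : 1 ≤ k := by
        have := Nat.min_le_left (β + γ) (α - 1)
        rcases le_total (β + γ) (α - 1) with h' | h' <;> omega
      have hpq : p + q = k := by
        have : p ≤ k := Nat.min_le_left _ _
        omega
      have hpβ : p ≤ β := Nat.min_le_right _ _
      have hqγ : q ≤ γ := by
        rcases le_total k β with h' | h'
        · have : p = k := min_eq_left h'
          omega
        · have : p = β := min_eq_right h'
          have : k ≤ β + γ := Nat.min_le_left _ _
          omega
      have hkα : k ≤ α - 1 := Nat.min_le_right _ _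
      have step : STEquiv (α, β, γ) (α - k, β + p, γ + q) :=
        hop α β γ (α - k) (β + p) (γ + q) 0 0 (2*p) (2*q) (by omega) (by omega)
          (Nat.zero_le _) (Nat.zero_le _) (by omega) (by omega)
          (by omega) (by omega) (by omega)
      obtain ⟨b, c, hb, hc, he⟩ := ih (α - k) (by omega) (β + p) (γ + q)
        (by omega) (by omega) (by omega)
      exact ⟨b, c, hb, hc, Relation.EqvGen.trans _ _ _ step he⟩

/-- Direct connection `(1,β,γ) ~ (1,1,1)` when `β ≤ γ ≤ 3β`. -/
lemma direct (β γ : ℕ) (hβ : 1 ≤ β) (h1 : β ≤ γ) (h3 : γ ≤ 3*β) :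
    STEquiv (1, β, γ) (1, 1, 1) := by
  apply link _ _ (1 + (γ - β), 2*β, β + γ)
  · exact stepA' 2 1 β γ 0 (γ - β) _ _ _ (by norm_num) le_rfl (by omega) (by omega)
      (by omega) (by omega) (by omega)
  · exact stepA' (β + γ) 1 1 1 (γ - β) 0 _ _ _ (by omega) le_rfl (by omega) (by omega)
      (by omega) (by omega) (by omega)

/-- Direct connection `(1,β,γ) ~ (1,1,1)` when `γ ≤ β ≤ 3γ`. -/
lemma direct' (β γ : ℕ) (hγ : 1 ≤ γ) (h1 : γ ≤ β) (h3 : β ≤ 3*γ) :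
    STEquiv (1, β, γ) (1, 1, 1) := by
  apply link _ _ (1 + (β - γ), β + γ, 2*γ)
  · exact stepA' 2 1 β γ (β - γ) 0 _ _ _ (by norm_num) le_rfl (by omega) (by omega)
      (by omega) (by omega) (by omega)
  · exact stepA' (β + γ) 1 1 1 0 (β - γ) _ _ _ (by omega) le_rfl (by omega) (by omega)
      (by omega) (by omega) (by omega)

/-- Rebalancing hop: `(1,β,γ) ~ (1,2β,γ−β)` when `2β ≤ γ`. -/
lemma hop2 (β γ : ℕ) (hβ : 1 ≤ β) (h : 2*β ≤ γ) :
    STEquiv (1, β, γ) (1, 2*β, γ - β) := by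
  apply link _ _ (1 + 2*β, 2*β, 2*γ - 2*β)
  · exact stepA' 2 1 β γ 0 (2*β) _ _ _ (by norm_num) le_rfl (by omega) (by omega)
      (by omega) (by omega) (by omega)
  · exact stepA' 2 1 (2*β) (γ - β) (2*β) 0 _ _ _ (by norm_num) le_rfl (by omega)
      (by omega) (by omega) (by omega) (by omega)

/-- Rebalancing hop: `(1,β,γ) ~ (1,β−γ,2γ)` when `2γ ≤ β`. -/
lemma hop2' (β γ : ℕ) (hγ : 1 ≤ γ) (h : 2*γ ≤ β) :
    STEquiv (1, β, γ) (1, β - γ, 2*γ) := by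
  apply link _ _ (1 + 2*γ, 2*β - 2*γ, 2*γ)
  · exact stepA' 2 1 β γ (2*γ) 0 _ _ _ (by norm_num) le_rfl (by omega) (by omega)
      (by omega) (by omega) (by omega)
  · exact stepA' 2 1 (β - γ) (2*γ) 0 (2*γ) _ _ _ (by norm_num) le_rfl (by omega)
      (by omega) (by omega) (by omega) (by omega)

/-- Every `(1,β,γ)` with `β,γ ≥ 1` is equivalent to `(1,1,1)`. -/
lemma balance : ∀ m β γ : ℕ, (β - γ) + (γ - β) ≤ m → 1 ≤ β → 1 ≤ γ →
    STEquiv (1, β, γ) (1, 1, 1) := by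
  intro m
  induction m with
  | zero =>
    intro β γ hm hβ hγ
    exact direct β γ hβ (by omega) (by omega)
  | succ m ih =>
    intro β γ hm hβ hγ
    rcases lt_or_ge (3*β) γ with h | h
    · refine Relation.EqvGen.trans _ _ _ (hop2 β γ hβ (by omega)) ?_
      exact ih (2*β) (γ - β) (by omega) (by omega) (by omega)
    · rcases lt_or_ge (3*γ) β with h' | h'
      · refine Relation.EqvGen.trans _ _ _ (hop2' β γ hγ (by omega)) ?_
        exact ih (β - γ) (2*γ) (by omega) (by omega) (by omega)
      · rcases le_total β γ with h'' | h''
        · exact direct β γ hβ h'' h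
        · exact direct' β γ hγ h'' h'

/-- Part (5) of the Main Theorem: every signature `(α, β, γ)` with `β, γ ≥ 1`
is equivalent to `(0, 1, 1)`. -/
theorem stmt12 (α β γ : ℕ) (hβ : 1 ≤ β) (hγ : 1 ≤ γ) :
    STEquiv (α, β, γ) (0, 1, 1) := by
  have last : STEquiv (1, 1, 1) (0, 1, 1) := by
    apply Relation.EqvGen.symm
    apply Relation.EqvGen.rel
    exact stepB' 2 0 1 1 0 1 _ _ _ (by norm_num) le_rfl (by omega) (by omega)
      (by omega) (by omega) (by omega)
  have main : ∀ α' : ℕ, 1 ≤ α' → STEquiv (α', β, γ) (0, 1, 1) := by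
    intro α' hα'
    obtain ⟨b, c, hb, hc, he⟩ := reduce_alpha α' β γ hα' hβ hγ
    exact Relation.EqvGen.trans _ _ _ he
      (Relation.EqvGen.trans _ _ _ (balance ((b - c) + (c - b)) b c le_rfl hb hc) last)
  rcases Nat.eq_zero_or_pos α with h | h
  · subst h
    have s : STStep (0, β, γ) (β + γ - 1, β, γ) :=
      stepB' 2 0 β γ (β - 1) γ _ _ _ (by norm_num) hβ (by omega) (by omega)
        (by omega) (by omega) (by omega)
    exact Relation.EqvGen.trans _ _ _ (Relation.EqvGen.rel _ _ s) (main _ (by omega))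
  · exact main α h
end

section
/- Let F be the free group on generators x, y, let n ≥ 1, and let Θ : F → Sym(Fin n) be the homomorphism with Θ(x) = σ the n-cycle (0 1 2 … n−1) and Θ(y) = 1. Then the subgroup H = Θ⁻¹(Stab(n−1)) has index n in F and is generated by the n + 1 elements xⁿ and xˡ y x⁻ˡ for l = 0, 1, …, n−1; moreover H is free of rank n + 1. -/
/-!
Sending `x` to the generator `t` of `ℤ` and `y` to `e₀` identifies `F` with `F(ℤ) ⋊ ℤ`, where `t`
translates the free basis `(e_q)` of `F(ℤ)`; so `e_q` corresponds to `x^q y x^(-q)`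
(Reidemeister–Schreier for the kernel of the exponent sum of `x`). Since `σ^k` fixes a point iff
`n ∣ k`, `H` corresponds to `F(ℤ) ⋊ nℤ`. Reindexing the basis by `q = q' n + r` with `0 ≤ r < n`
turns this into `F(ℤ × Fin n) ⋊ ℤ` with `ℤ` translating `q'`, which is free on the `n` elements
`e_r = x^r y x^(-r)` together with `t^n = x^n`.
-/

open Multiplicative SemidirectProduct

namespace FreeGroup

variable (α : Type*)

def shiftAut : Multiplicative ℤ →* MulAut (FreeGroup (ℤ × α)) where
  toFun k := freeGroupCongr ((Equiv.addRight k.toAdd).prodCongr (Equiv.refl α))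
  map_one' := by ext; simp
  map_mul' k l := MulEquiv.toMonoidHom_injective <| ext_hom _ _ fun ⟨q, a⟩ => by
    simp [add_assoc, add_comm (toAdd l)]

variable {α}

@[simp] lemma shiftAut_of (k : Multiplicative ℤ) (q : ℤ) (a : α) :
    shiftAut α k (of (q, a)) = of (q + k.toAdd, a) := rfl

lemma inr_zpow_conj_inl_of (q : ℤ) (a : α) :
    (inr (ofAdd 1) ^ q * inl (of (0, a)) * (inr (ofAdd 1) ^ q)⁻¹ :
      FreeGroup (ℤ × α) ⋊[shiftAut α] Multiplicative ℤ) = inl (of (q, a)) := by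
  rw [← _root_.map_zpow, ← _root_.map_inv, ← inl_aut, shiftAut_of, ← ofAdd_zsmul, smul_eq_mul,
    mul_one, zero_add, toAdd_ofAdd]

variable (α)

def toShift : FreeGroup (Option α) →* FreeGroup (ℤ × α) ⋊[shiftAut α] Multiplicative ℤ :=
  lift fun o => o.elim (inr (ofAdd 1)) fun a => inl (of (0, a))

def ofShift : FreeGroup (ℤ × α) ⋊[shiftAut α] Multiplicative ℤ →* FreeGroup (Option α) :=
  SemidirectProduct.lift (lift fun p => of none ^ p.1 * of (some p.2) * (of none ^ p.1)⁻¹)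
    (zpowersHom _ (of none)) fun k => by
      refine ext_hom _ _ fun ⟨q, a⟩ => ?_
      simp only [MonoidHom.comp_apply, MulEquiv.coe_toMonoidHom, shiftAut_of, lift_apply_of,
        MulAut.conj_apply, zpowersHom_apply, zpow_add]
      group

variable {α}

@[simp] lemma toShift_of_none : toShift α (of none) = inr (ofAdd 1) := lift_apply_of

@[simp] lemma toShift_of_some (a : α) : toShift α (of (some a)) = inl (of (0, a)) :=
  lift_apply_of

@[simp] lemma ofShift_inl_of (q : ℤ) (a : α) :
    ofShift α (inl (of (q, a))) = of none ^ q * of (some a) * (of none ^ q)⁻¹ := by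
  simp [ofShift]

@[simp] lemma ofShift_inr (k : Multiplicative ℤ) : ofShift α (inr k) = of none ^ k.toAdd := by
  simp [ofShift]

variable (α)

def optionMulEquivShift :
    FreeGroup (Option α) ≃* FreeGroup (ℤ × α) ⋊[shiftAut α] Multiplicative ℤ :=
  (toShift α).toMulEquiv (ofShift α)
    (ext_hom _ _ fun o => by cases o <;> simp)
    (hom_ext (ext_hom _ _ fun ⟨q, a⟩ => by simp [inr_zpow_conj_inl_of])
      (MonoidHom.ext_mint (by simp)))

section scale

variable (n : ℕ) [NeZero n]

def divModShiftEquiv : ℤ × Fin n ≃ ℤ × Fin 1 :=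
  (Int.divModEquiv n).symm.trans (Equiv.prodUnique ℤ (Fin 1)).symm

@[simp] lemma divModShiftEquiv_apply (q : ℤ) (r : Fin n) :
    divModShiftEquiv n (q, r) = (q * n + r, 0) := rfl

def scaleShift : FreeGroup (ℤ × Fin n) ⋊[shiftAut (Fin n)] Multiplicative ℤ →*
    FreeGroup (ℤ × Fin 1) ⋊[shiftAut (Fin 1)] Multiplicative ℤ :=
  SemidirectProduct.map (freeGroupCongr (divModShiftEquiv n)).toMonoidHom (zpowGroupHom n)
    fun k => ext_hom _ _ fun ⟨q, r⟩ => by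
      simp only [MonoidHom.comp_apply, MulEquiv.coe_toMonoidHom, shiftAut_of,
        freeGroupCongr_apply, map.of, divModShiftEquiv_apply, zpowGroupHom_apply, toAdd_zpow,
        smul_eq_mul]
      ring_nf

lemma scaleShift_injective : Function.Injective (scaleShift n) := by
  intro z w h
  ext1
  · exact (freeGroupCongr (divModShiftEquiv n)).injective (congrArg SemidirectProduct.left h)
  · exact zpow_left_injective (Int.natCast_ne_zero.mpr (NeZero.ne n))
      (congrArg SemidirectProduct.right h)

lemma range_scaleShift : (scaleShift n).range =
    (AddSubgroup.toSubgroup (AddSubgroup.zmultiples (n : ℤ))).comap rightHom := by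
  ext z
  simp only [MonoidHom.mem_range, Subgroup.mem_comap, Multiplicative.mem_toSubgroup,
    rightHom_eq_right, Int.mem_zmultiples_iff]
  constructor
  · rintro ⟨w, rfl⟩
    exact ⟨w.right.toAdd, by simp [scaleShift, map_right]⟩
  · rintro ⟨t, ht⟩
    refine ⟨⟨(freeGroupCongr (divModShiftEquiv n)).symm z.left, ofAdd t⟩, ?_⟩
    ext1
    · exact (freeGroupCongr (divModShiftEquiv n)).apply_symm_apply z.left
    · apply toAdd.injective
      rw [scaleShift, map_right, zpowGroupHom_apply, toAdd_zpow, ht, toAdd_ofAdd, smul_eq_mul,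
        mul_comm]

end scale

variable {α} [DecidableEq α]

def exponentSum (a : α) : FreeGroup α →* Multiplicative ℤ :=
  lift fun b => if b = a then ofAdd 1 else 1

lemma exponentSum_surjective (a : α) : Function.Surjective (exponentSum a) :=
  fun k => ⟨of a ^ k.toAdd, by simp [exponentSum, ← ofAdd_zsmul]⟩

end FreeGroup

open Fin.CommRing in
lemma finRotate_zpow_apply (n : ℕ) [NeZero n] (k : ℤ) (i : Fin n) :
    (finRotate n ^ k) i = i + k := by
  induction k using Int.induction_on with
  | zero => simp
  | succ k ih =>
    rw [add_comm, zpow_add, zpow_one, Equiv.Perm.mul_apply, ih, finRotate_apply]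
    push_cast; ring
  | pred k ih =>
    rw [sub_eq_neg_add, zpow_add, zpow_neg_one, Equiv.Perm.mul_apply, ih, Equiv.Perm.inv_def,
      finRotate_symm_apply]
    push_cast; ring

open Fin.CommRing in
lemma finRotate_zpow_apply_eq_self_iff (n : ℕ) [NeZero n] (k : ℤ) (i : Fin n) :
    (finRotate n ^ k) i = i ↔ (n : ℤ) ∣ k := by
  have := Int.emod_nonneg k (Int.natCast_ne_zero.mpr (NeZero.ne n))
  rw [finRotate_zpow_apply, add_eq_left, Fin.ext_iff, Fin.val_intCast, Fin.val_zero,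
    Int.dvd_iff_emod_eq_zero]
  omega

open FreeGroup

def finSuccMulEquivShift (k : ℕ) :
    FreeGroup (Fin (k + 1)) ≃* FreeGroup (ℤ × Fin k) ⋊[shiftAut (Fin k)] Multiplicative ℤ :=
  (freeGroupCongr (finSuccEquiv k)).trans (optionMulEquivShift (Fin k))

lemma rightHom_comp_finSuccMulEquivShift (k : ℕ) :
    rightHom.comp (finSuccMulEquivShift k).toMonoidHom = exponentSum 0 := by
  refine ext_hom _ _ fun i => ?_
  cases i using Fin.cases <;> simp [finSuccMulEquivShift, optionMulEquivShift, exponentSum]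

def schreierHom (n : ℕ) : FreeGroup (Fin (n + 1)) →* FreeGroup (Fin 2) :=
  lift (Fin.cons (of 0 ^ n) fun l : Fin n => of 0 ^ (l : ℕ) * of 1 * (of 0 ^ (l : ℕ))⁻¹)

lemma schreierHom_eq (n : ℕ) [NeZero n] :
    schreierHom n = (finSuccMulEquivShift 1).symm.toMonoidHom.comp
      ((scaleShift n).comp (finSuccMulEquivShift n).toMonoidHom) := by
  refine ext_hom _ _ fun i => ?_
  cases i using Fin.cases <;>
    simp [schreierHom, finSuccMulEquivShift, optionMulEquivShift, scaleShift]

lemma schreierHom_injective (n : ℕ) [NeZero n] : Function.Injective (schreierHom n) := by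
  rw [schreierHom_eq]
  exact (finSuccMulEquivShift 1).symm.injective.comp
    ((scaleShift_injective n).comp (finSuccMulEquivShift n).injective)

lemma range_schreierHom (n : ℕ) [NeZero n] :
    (schreierHom n).range =
      (AddSubgroup.toSubgroup (AddSubgroup.zmultiples (n : ℤ))).comap (exponentSum 0) := by
  rw [schreierHom_eq, MonoidHom.range_comp, MonoidHom.range_comp, MonoidHom.range_eq_top.mpr
    (finSuccMulEquivShift n).surjective, ← MonoidHom.range_eq_map, range_scaleShift,
    ← rightHom_comp_finSuccMulEquivShift, ← Subgroup.comap_comap]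
  exact (Subgroup.comap_equiv_eq_map_symm' _ _).symm

lemma range_schreierHom_eq_closure (n : ℕ) :
    (schreierHom n).range = Subgroup.closure ({of 0 ^ n} ∪
      {g | ∃ l : ℕ, l < n ∧ g = of 0 ^ l * of 1 * (of 0 ^ l)⁻¹}) := by
  rw [schreierHom, range_lift_eq_closure, Fin.range_cons, Set.insert_eq]
  congr 2
  ext g
  constructor
  · rintro ⟨l, rfl⟩
    exact ⟨l, l.isLt, rfl⟩
  · rintro ⟨l, hl, rfl⟩
    exact ⟨⟨l, hl⟩, rfl⟩

/-- Construction A for the free group `F` on `{x, y}` (case of rank 2, no twisting):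
for `Θ : F → Sym(Fin n)` with `Θ x = (0 1 ⋯ n-1)` and `Θ y = 1`, the preimage `H`
of the stabilizer of the point `n - 1` has index `n`, is generated by the `n + 1`
elements `xⁿ` and `xˡ y x⁻ˡ` (`0 ≤ l ≤ n - 1`), and is free of rank `n + 1`. -/
theorem stmt15 (n : ℕ) (hn : 1 ≤ n) :
    let X : FreeGroup (Fin 2) := FreeGroup.of 0
    let Y : FreeGroup (Fin 2) := FreeGroup.of 1
    let Θ : FreeGroup (Fin 2) →* Equiv.Perm (Fin n) :=
      FreeGroup.lift (fun i : Fin 2 => if i = 0 then finRotate n else 1)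
    let H : Subgroup (FreeGroup (Fin 2)) :=
      Subgroup.comap Θ
        (MulAction.stabilizer (Equiv.Perm (Fin n)) (⟨n - 1, by omega⟩ : Fin n))
    H.index = n ∧
      H = Subgroup.closure
          ({X ^ n} ∪ {g | ∃ l : ℕ, l < n ∧ g = X ^ l * Y * (X ^ l)⁻¹}) ∧
      Nonempty (H ≃* FreeGroup (Fin (n + 1))) := by
  intro X Y Θ H
  have : NeZero n := ⟨by omega⟩
  have hΘ : Θ = (zpowersHom _ (finRotate n)).comp (exponentSum 0) := by
    refine ext_hom _ _ fun i => ?_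
    fin_cases i <;> simp [Θ, exponentSum]
  have hH : H = (schreierHom n).range := by
    ext g
    simp [H, hΘ, range_schreierHom, Equiv.Perm.smul_def, finRotate_zpow_apply_eq_self_iff,
      Int.mem_zmultiples_iff]
  refine ⟨?_, hH.trans (range_schreierHom_eq_closure n), ?_⟩
  · rw [hH, range_schreierHom, Subgroup.index_comap_of_surjective _ (exponentSum_surjective 0),
      AddSubgroup.index_toSubgroup, Int.index_zmultiples, Int.natAbs_natCast]
  · exact ⟨((MonoidHom.ofInjective (schreierHom_injective n)).trans
      (MulEquiv.subgroupCongr hH.symm)).symm⟩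
end
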